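/- arXiv:2505.12049 — 3 statements merged into one kernel-verified Lean document; each statement's English description precedes it below -/
import Mathlib

section
/- The 2-dimensional utility representation with a single unsafe outcome is unique up to transformations u ↦ A u + b with A in LT+(2), b in R^2: if u and v are two 2-dimensional linear lexicographic utility functions representing the same preference relation satisfying the single-unsafe-outcome assumptions (with a strict preference between two safe outcomes), then there exist A in LT+(2) and b in R^2 such that v = A u + b. -/
variable {O : Type*} [Fintype O] [DecidableEq O]

/-- A lottery: a probability distribution on the finite outcome set `O`. -/
def IsLottery (p : O → ℝ) : Prop := (∀ o, 0 ≤ p o) ∧ ∑ o, p o = 1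

/-- The Dirac lottery concentrated at outcome `o`. -/
def dirac (o : O) : O → ℝ := fun o' => if o' = o then 1 else 0

/-- Indifference induced by a preference relation. -/
def Indiff (pref : (O → ℝ) → (O → ℝ) → Prop) (p q : O → ℝ) : Prop :=
  pref p q ∧ pref q p

/-- A safe outcome: one not indifferent to the unsafe outcome `odag`. -/
def SafeOutcome (pref : (O → ℝ) → (O → ℝ) → Prop) (odag : O) (o : O) : Prop :=
  ¬ Indiff pref (dirac o) (dirac odag)

/-- A lottery supported on safe outcomes. -/
def SafeLottery (pref : (O → ℝ) → (O → ℝ) → Prop) (odag : O) (p : O → ℝ) : Prop :=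
  IsLottery p ∧ ∀ o, ¬ SafeOutcome pref odag o → p o = 0

/-- Strict lexicographic order on `ℝ²`. -/
def lexGT2 (u v : Fin 2 → ℝ) : Prop :=
  v 0 < u 0 ∨ (u 0 = v 0 ∧ v 1 < u 1)

/-- Weak lexicographic order on `ℝ²`. -/
def lexGE2 (u v : Fin 2 → ℝ) : Prop := u = v ∨ lexGT2 u v

/-- `LT⁺(2)`: 2×2 lower triangular matrices with strictly positive diagonal. -/
def LTpos2 : Set (Matrix (Fin 2) (Fin 2) ℝ) :=
  {A | (∀ i j : Fin 2, i < j → A i j = 0) ∧ ∀ i : Fin 2, 0 < A i i}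

/-!
Safety First makes every safe outcome share one first utility coordinate, strictly above that of
`o†`: a tie there is excluded by a strictly ranked pair of safe outcomes `s₁ ≻ s₂`, since a mixture
of `s₁` with a little `o†` would then still beat `s₂`. So on safe lotteries the preference is
represented by the second coordinates of `u` and `v` alone; both are affine, and affine functions
inducing the same weak order on a convex set differ by a positive affine map (uniqueness in the
von Neumann–Morgenstern theorem). Unsafe outcomes are indifferent to `o†`, so off the safe outcomes
`u` and `v` each take a single value, and the remaining entries of `A` and `b` solve two linear
equations.
-/

open AffineMap Filter Matrix Topology

section VonNeumannMorgenstern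

variable {E : Type*} [AddCommGroup E] [Module ℝ E] {s : Set E} {f g : E →ᵃ[ℝ] ℝ}

theorem AffineMap.collinear_of_le_iff_of_between (hs : Convex ℝ s)
    (hfg : ∀ x ∈ s, ∀ y ∈ s, f x ≤ f y ↔ g x ≤ g y) {x y z : E} (hx : x ∈ s) (hy : y ∈ s)
    (hz : z ∈ s) (hxz : f x ≤ f z) (hzy : f z ≤ f y) :
    (g z - g x) * (f y - f x) = (g y - g x) * (f z - f x) := by
  set t := (f z - f x) / (f y - f x)
  have ht : t * (f y - f x) = f z - f x := div_mul_cancel_of_imp fun h => by linarith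
  have htI : t ∈ Set.Icc (0 : ℝ) 1 :=
    ⟨div_nonneg (by linarith) (by linarith), div_le_one_of_le₀ (by linarith) (by linarith)⟩
  have hm := hs.lineMap_mem hx hy htI
  have hfm : f (lineMap x y t) = f z := by
    rw [apply_lineMap, lineMap_apply_ring']; linarith
  have hgm : g (lineMap x y t) = g z :=
    le_antisymm ((hfg _ hm _ hz).1 hfm.le) ((hfg _ hz _ hm).1 hfm.ge)
  rw [apply_lineMap, lineMap_apply_ring'] at hgm
  linear_combination (f y - f x) * hgm.symm + (g y - g x) * ht

theorem AffineMap.exists_pos_mul_add_of_le_iff (hs : Convex ℝ s)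
    (hfg : ∀ x ∈ s, ∀ y ∈ s, f x ≤ f y ↔ g x ≤ g y) :
    ∃ a > 0, ∃ b, ∀ z ∈ s, g z = a * f z + b := by
  by_cases hlt : ∃ x ∈ s, ∃ y ∈ s, f x < f y
  · obtain ⟨x, hx, y, hy, hxy⟩ := hlt
    have hgxy : g x < g y := lt_of_not_ge fun h => hxy.not_ge ((hfg y hy x hx).2 h)
    have hD : f y - f x ≠ 0 := sub_ne_zero.2 hxy.ne'
    set a := (g y - g x) / (f y - f x)
    have ha : a * (f y - f x) = g y - g x := div_mul_cancel₀ _ hD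
    refine ⟨a, div_pos (by linarith) (by linarith), g x - a * f x, fun z hz => ?_⟩
    have hcol : (g z - g x) * (f y - f x) = (g y - g x) * (f z - f x) := by
      rcases le_total (f z) (f x) with hzx | hxz
      · linear_combination -(collinear_of_le_iff_of_between hs hfg hz hy hx hzx hxy.le)
      rcases le_total (f z) (f y) with hzy | hyz
      · exact collinear_of_le_iff_of_between hs hfg hx hy hz hxz hzy
      · exact (collinear_of_le_iff_of_between hs hfg hx hz hy hxy.le hyz).symm
    apply mul_right_cancel₀ hD
    linear_combination hcol - (f z - f x) * ha
  · push Not at hlt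
    rcases s.eq_empty_or_nonempty with rfl | ⟨x, hx⟩
    · exact ⟨1, one_pos, 0, by simp⟩
    refine ⟨1, one_pos, g x - f x, fun z hz => ?_⟩
    have hf : f z = f x := le_antisymm (hlt x hx z hz) (hlt z hz x hx)
    have hg : g z = g x := le_antisymm ((hfg z hz x hx).1 hf.le) ((hfg x hx z hz).1 hf.ge)
    rw [hf, hg]; ring

end VonNeumannMorgenstern

theorem le_of_forall_mix_le {a x y : ℝ} (h : ∀ ε ∈ Set.Ioc (0 : ℝ) 1, ε * a + (1 - ε) * x ≤ y) :
    x ≤ y := by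
  have hlim : Tendsto (fun ε : ℝ => ε * a + (1 - ε) * x) (𝓝[>] 0) (𝓝 x) := by
    have hc : Continuous fun ε : ℝ => ε * a + (1 - ε) * x := by fun_prop
    simpa using (hc.tendsto 0).mono_left nhdsWithin_le_nhds
  refine le_of_tendsto hlim ?_
  filter_upwards [Ioc_mem_nhdsGT one_pos] with ε hε using h ε hε

section Lex

variable {x y : Fin 2 → ℝ}

theorem lexGE2_total (x y : Fin 2 → ℝ) : lexGE2 x y ∨ lexGE2 y x := by
  rcases lt_trichotomy (x 0) (y 0) with h0 | h0 | h0
  · exact Or.inr (Or.inr (Or.inl h0))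
  rcases lt_trichotomy (x 1) (y 1) with h1 | h1 | h1
  · exact Or.inr (Or.inr (Or.inr ⟨h0.symm, h1⟩))
  · exact Or.inl (Or.inl (funext fun i => by fin_cases i; exacts [h0, h1]))
  · exact Or.inl (Or.inr (Or.inr ⟨h0, h1⟩))
  · exact Or.inl (Or.inr (Or.inl h0))

theorem lexGE2.antisymm (hxy : lexGE2 x y) (hyx : lexGE2 y x) : x = y := by
  rcases hxy with hxy | hxy
  · exact hxy
  rcases hyx with hyx | hyx
  · exact hyx.symm
  rcases hxy with _ | ⟨_, _⟩ <;> rcases hyx with _ | ⟨_, _⟩ <;> linarith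

theorem lexGT2_of_not_lexGE2 (h : ¬ lexGE2 x y) : lexGT2 y x :=
  ((lexGE2_total y x).resolve_right h).resolve_left fun hyx => h (Or.inl hyx.symm)

theorem lexGE2_iff_of_fst_eq (h : x 0 = y 0) : lexGE2 x y ↔ y 1 ≤ x 1 := by
  constructor
  · rintro (rfl | h' | ⟨_, h'⟩)
    exacts [le_rfl, absurd h (ne_of_gt h'), h'.le]
  · intro h1
    rcases h1.lt_or_eq with h1 | h1
    · exact Or.inr (Or.inr ⟨h, h1⟩)
    · exact Or.inl (funext fun i => by fin_cases i; exacts [h, h1.symm])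

end Lex

theorem exists_mem_LTpos2_mulVec_add {a a' : Fin 2 → ℝ} {c d α β : ℝ} (hc : a 0 < c)
    (hd : a' 0 < d) (hα : 0 < α) :
    ∃ A ∈ LTpos2, ∃ b, A *ᵥ a + b = a' ∧
      ∀ x y : Fin 2 → ℝ, x 0 = c → y 0 = d → y 1 = α * x 1 + β → A *ᵥ x + b = y := by
  have hca : c - a 0 ≠ 0 := sub_ne_zero.2 hc.ne'
  set A : Matrix (Fin 2) (Fin 2) ℝ :=
    !![(d - a' 0) / (c - a 0), 0; (β + α * a 1 - a' 1) / (c - a 0), α]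
  refine ⟨A, ⟨?_, ?_⟩, a' - A *ᵥ a, by abel, fun x y hx hy hxy => ?_⟩
  · intro i j hij
    fin_cases i <;> fin_cases j <;> simp_all [A]
  · intro i
    fin_cases i <;> simp [A, div_pos (sub_pos.2 hd) (sub_pos.2 hc), hα]
  · funext i
    fin_cases i <;> simp [A, dotProduct, vecHead, vecTail, hx, hy, hxy] <;>
      field_simp <;> ring

theorem Matrix.sum_smul_mulVec_add {ι m n : Type*} [Fintype ι] [Fintype n]
    (A : Matrix m n ℝ) (b : m → ℝ) {p : ι → ℝ} (hp : ∑ i, p i = 1) (x : ι → n → ℝ) :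
    ∑ i, p i • (A *ᵥ x i + b) = A *ᵥ ∑ i, p i • x i + b := by
  simp only [smul_add, Finset.sum_add_distrib, ← Finset.sum_smul, hp, one_smul,
    Matrix.mulVec_sum, Matrix.mulVec_smul]

theorem IsLottery.mix {ι : Type*} [Fintype ι] {p q : ι → ℝ} (hp : IsLottery p) (hq : IsLottery q)
    {α : ℝ} (h0 : 0 ≤ α) (h1 : α ≤ 1) : IsLottery (α • p + (1 - α) • q) :=
  convex_stdSimplex ℝ ι hp hq h0 (sub_nonneg.2 h1) (add_sub_cancel α 1)

section Preferences

variable {pref : (O → ℝ) → (O → ℝ) → Prop} {odag : O} {w : (O → ℝ) → Fin 2 → ℝ}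
  {p q : O → ℝ} {o : O}

def IsLinLexUtility (pref : (O → ℝ) → (O → ℝ) → Prop) (w : (O → ℝ) → Fin 2 → ℝ) : Prop :=
  (∀ p, IsLottery p → w p = ∑ o, p o • w (dirac o)) ∧
    ∀ p q, IsLottery p → IsLottery q → (lexGE2 (w p) (w q) ↔ pref p q)

def SafetyFirst (pref : (O → ℝ) → (O → ℝ) → Prop) (odag : O) : Prop :=
  ∀ p q : O → ℝ, SafeLottery pref odag p → SafeLottery pref odag q →
    ∀ ε : ℝ, 0 < ε → ε ≤ 1 → ¬ pref (ε • dirac odag + (1 - ε) • p) q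

theorem isLottery_dirac (o : O) : IsLottery (dirac o) :=
  ⟨fun o' => by unfold dirac; split_ifs <;> norm_num, by simp [dirac]⟩

theorem SafeOutcome.safeLottery_dirac (ho : SafeOutcome pref odag o) :
    SafeLottery pref odag (dirac o) :=
  ⟨isLottery_dirac o, fun o' ho' => if_neg fun h : o' = o => ho' (h ▸ ho)⟩

theorem convex_setOf_safeLottery : Convex ℝ {p | SafeLottery pref odag p} := by
  intro p hp q hq a b ha hb hab
  exact ⟨convex_stdSimplex ℝ O hp.1 hq.1 ha hb hab,
    fun o ho => by simp [hp.2 o ho, hq.2 o ho]⟩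

namespace IsLinLexUtility

theorem apply_mix (hw : IsLinLexUtility pref w) (hp : IsLottery p) (hq : IsLottery q) {α : ℝ}
    (h0 : 0 ≤ α) (h1 : α ≤ 1) : w (α • p + (1 - α) • q) = α • w p + (1 - α) • w q := by
  rw [hw.1 _ (hp.mix hq h0 h1), hw.1 p hp, hw.1 q hq, Finset.smul_sum, Finset.smul_sum,
    ← Finset.sum_add_distrib]
  simp only [Pi.add_apply, Pi.smul_apply, smul_eq_mul, add_smul, mul_smul]

theorem exists_affineMap (hw : IsLinLexUtility pref w) (i : Fin 2) :
    ∃ f : (O → ℝ) →ᵃ[ℝ] ℝ, ∀ p, IsLottery p → f p = w p i :=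
  ⟨((LinearMap.proj i).comp (Fintype.linearCombination ℝ fun o => w (dirac o))).toAffineMap,
    fun p hp => by simp [hw.1 p hp, Fintype.linearCombination_apply]⟩

theorem eq_of_indiff (hw : IsLinLexUtility pref w) (hp : IsLottery p) (hq : IsLottery q)
    (h : Indiff pref p q) : w p = w q :=
  ((hw.2 p q hp hq).2 h.1).antisymm ((hw.2 q p hq hp).2 h.2)

theorem apply_dirac_of_not_safeOutcome (hw : IsLinLexUtility pref w)
    (ho : ¬ SafeOutcome pref odag o) : w (dirac o) = w (dirac odag) :=
  hw.eq_of_indiff (isLottery_dirac o) (isLottery_dirac odag) (not_not.1 ho)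

theorem lexGT2_of_not_pref (hw : IsLinLexUtility pref w) (hp : IsLottery p) (hq : IsLottery q)
    (h : ¬ pref p q) : lexGT2 (w q) (w p) :=
  lexGT2_of_not_lexGE2 fun h' => h ((hw.2 p q hp hq).1 h')

theorem lexGT2_mix_dirac (hw : IsLinLexUtility pref w) (hS : SafetyFirst pref odag)
    (hp : SafeLottery pref odag p) (hq : SafeLottery pref odag q) {ε : ℝ}
    (hε : ε ∈ Set.Ioc (0 : ℝ) 1) :
    lexGT2 (w q) (ε • w (dirac odag) + (1 - ε) • w p) := by
  rw [← hw.apply_mix (isLottery_dirac odag) hp.1 hε.1.le hε.2]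
  exact hw.lexGT2_of_not_pref ((isLottery_dirac odag).mix hp.1 hε.1.le hε.2) hq.1
    (hS p q hp hq ε hε.1 hε.2)

theorem fst_le_of_safeOutcome (hw : IsLinLexUtility pref w) (hS : SafetyFirst pref odag)
    {o o' : O} (ho : SafeOutcome pref odag o) (ho' : SafeOutcome pref odag o') :
    w (dirac o) 0 ≤ w (dirac o') 0 :=
  le_of_forall_mix_le (a := w (dirac odag) 0) fun ε hε => by
    rcases hw.lexGT2_mix_dirac hS ho.safeLottery_dirac ho'.safeLottery_dirac hε with h | ⟨h, -⟩ <;>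
      simp only [Pi.add_apply, Pi.smul_apply, smul_eq_mul] at h <;> linarith

theorem fst_eq_of_safeOutcome (hw : IsLinLexUtility pref w) (hS : SafetyFirst pref odag)
    {o o' : O} (ho : SafeOutcome pref odag o) (ho' : SafeOutcome pref odag o') :
    w (dirac o) 0 = w (dirac o') 0 :=
  (hw.fst_le_of_safeOutcome hS ho ho').antisymm (hw.fst_le_of_safeOutcome hS ho' ho)

theorem fst_dirac_lt (hw : IsLinLexUtility pref w) (hS : SafetyFirst pref odag) {s₁ s₂ : O}
    (hs₁ : SafeOutcome pref odag s₁) (hs₂ : SafeOutcome pref odag s₂)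
    (h21 : ¬ pref (dirac s₂) (dirac s₁)) : w (dirac odag) 0 < w (dirac s₁) 0 := by
  have hgt := hw.lexGT2_mix_dirac hS hs₁.safeLottery_dirac hs₁.safeLottery_dirac
    (Set.right_mem_Ioc.2 one_pos)
  simp only [one_smul, sub_self, zero_smul, add_zero] at hgt
  rcases hgt with hlt | ⟨heq, -⟩
  · exact hlt
  have h12 : w (dirac s₁) 0 = w (dirac s₂) 0 := hw.fst_eq_of_safeOutcome hS hs₁ hs₂
  have hlt : w (dirac s₂) 1 < w (dirac s₁) 1 := by
    rcases hw.lexGT2_of_not_pref (isLottery_dirac s₂) (isLottery_dirac s₁) h21 with h | ⟨-, h⟩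
    exacts [absurd h12 h.ne', h]
  refine absurd (le_of_forall_mix_le (a := w (dirac odag) 1) fun ε hε => ?_) hlt.not_ge
  rcases hw.lexGT2_mix_dirac hS hs₁.safeLottery_dirac hs₂.safeLottery_dirac hε with h | ⟨-, h⟩ <;>
    simp only [Pi.add_apply, Pi.smul_apply, smul_eq_mul, ← heq, ← h12] at h <;> linarith

theorem fst_of_safeLottery (hw : IsLinLexUtility pref w) (hS : SafetyFirst pref odag)
    (ho : SafeOutcome pref odag o) (hp : SafeLottery pref odag p) :
    w p 0 = w (dirac o) 0 := by
  have hterm : ∀ o', p o' * w (dirac o') 0 = p o' * w (dirac o) 0 := fun o' => by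
    by_cases ho' : SafeOutcome pref odag o'
    · rw [hw.fst_eq_of_safeOutcome hS ho' ho]
    · simp [hp.2 o' ho']
  rw [hw.1 p hp.1]
  simp only [Finset.sum_apply, Pi.smul_apply, smul_eq_mul, hterm, ← Finset.sum_mul, hp.1.2,
    one_mul]

theorem pref_iff_snd_le (hw : IsLinLexUtility pref w) (hS : SafetyFirst pref odag)
    (ho : SafeOutcome pref odag o) (hp : SafeLottery pref odag p) (hq : SafeLottery pref odag q) :
    pref p q ↔ w q 1 ≤ w p 1 := by
  rw [← hw.2 p q hp.1 hq.1, lexGE2_iff_of_fst_eq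
    (by rw [hw.fst_of_safeLottery hS ho hp, hw.fst_of_safeLottery hS ho hq])]

theorem exists_snd_eq_mul_add {u v : (O → ℝ) → Fin 2 → ℝ}
    (hu : IsLinLexUtility pref u) (hv : IsLinLexUtility pref v) (hS : SafetyFirst pref odag)
    {s : O} (hs : SafeOutcome pref odag s) :
    ∃ α > 0, ∃ β, ∀ o, SafeOutcome pref odag o → v (dirac o) 1 = α * u (dirac o) 1 + β := by
  obtain ⟨f, hf⟩ := hu.exists_affineMap 1
  obtain ⟨g, hg⟩ := hv.exists_affineMap 1
  have hfg : ∀ p ∈ {p | SafeLottery pref odag p}, ∀ q ∈ {p | SafeLottery pref odag p},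
      f p ≤ f q ↔ g p ≤ g q := fun p hp q hq => by
    rw [hf p hp.1, hf q hq.1, hg p hp.1, hg q hq.1, ← hu.pref_iff_snd_le hS hs hq hp,
      hv.pref_iff_snd_le hS hs hq hp]
  obtain ⟨α, hα, β, hαβ⟩ := exists_pos_mul_add_of_le_iff convex_setOf_safeLottery hfg
  refine ⟨α, hα, β, fun o ho => ?_⟩
  have hαβo := hαβ _ ho.safeLottery_dirac
  rwa [hf _ (isLottery_dirac o), hg _ (isLottery_dirac o)] at hαβo

end IsLinLexUtility

end Preferences

theorem stmt_8_general (odag : O) (pref : (O → ℝ) → (O → ℝ) → Prop)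
    (u v : (O → ℝ) → Fin 2 → ℝ)
    -- `u` and `v` are linear lexicographic utility functions representing `pref`
    (hulin : ∀ p : O → ℝ, IsLottery p → u p = ∑ o, p o • u (dirac o))
    (hvlin : ∀ p : O → ℝ, IsLottery p → v p = ∑ o, p o • v (dirac o))
    (hurep : ∀ p q : O → ℝ, IsLottery p → IsLottery q →
      (lexGE2 (u p) (u q) ↔ pref p q))
    (hvrep : ∀ p q : O → ℝ, IsLottery p → IsLottery q →
      (lexGE2 (v p) (v q) ↔ pref p q))
    -- Safety First
    (hsafety : ∀ p q : O → ℝ, SafeLottery pref odag p → SafeLottery pref odag q →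
      ∀ ε : ℝ, 0 < ε → ε ≤ 1 → ¬ pref (ε • dirac odag + (1 - ε) • p) q)
    -- Non-triviality: a strict preference between two safe outcomes
    (hnontriv : ∃ o₁ o₂ : O, SafeOutcome pref odag o₁ ∧ SafeOutcome pref odag o₂ ∧
      ¬ Indiff pref (dirac o₁) (dirac o₂)) :
    ∃ A ∈ LTpos2, ∃ b : Fin 2 → ℝ,
      ∀ p : O → ℝ, IsLottery p → v p = A.mulVec (u p) + b := by
  have hu : IsLinLexUtility pref u := ⟨hulin, hurep⟩
  have hv : IsLinLexUtility pref v := ⟨hvlin, hvrep⟩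
  obtain ⟨s₁, s₂, hs₁, hs₂, h21⟩ : ∃ s₁ s₂, SafeOutcome pref odag s₁ ∧
      SafeOutcome pref odag s₂ ∧ ¬ pref (dirac s₂) (dirac s₁) := by
    obtain ⟨o₁, o₂, h₁, h₂, hnind⟩ := hnontriv
    rcases not_and_or.1 hnind with h | h
    exacts [⟨o₂, o₁, h₂, h₁, h⟩, ⟨o₁, o₂, h₁, h₂, h⟩]
  obtain ⟨α, hα, β, hsnd⟩ := hu.exists_snd_eq_mul_add hv hsafety hs₁
  obtain ⟨A, hA, b, hodag, hsafe⟩ := exists_mem_LTpos2_mulVec_add (β := β)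
    (hu.fst_dirac_lt hsafety hs₁ hs₂ h21) (hv.fst_dirac_lt hsafety hs₁ hs₂ h21) hα
  have hdirac : ∀ o, v (dirac o) = A *ᵥ u (dirac o) + b := fun o => by
    by_cases ho : SafeOutcome pref odag o
    · exact (hsafe _ _ (hu.fst_eq_of_safeOutcome hsafety ho hs₁)
        (hv.fst_eq_of_safeOutcome hsafety ho hs₁) (hsnd o ho)).symm
    · rw [hu.apply_dirac_of_not_safeOutcome ho, hv.apply_dirac_of_not_safeOutcome ho, hodag]
  refine ⟨A, hA, b, fun p hp => ?_⟩
  simp only [hvlin p hp, hulin p hp, hdirac, ← sum_smul_mulVec_add A b hp.2]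

theorem stmt_8 (odag : O) (pref : (O → ℝ) → (O → ℝ) → Prop)
    (u v : (O → ℝ) → Fin 2 → ℝ)
    -- `u` and `v` are linear lexicographic utility functions representing `pref`
    (hulin : ∀ p : O → ℝ, IsLottery p → u p = ∑ o, p o • u (dirac o))
    (hvlin : ∀ p : O → ℝ, IsLottery p → v p = ∑ o, p o • v (dirac o))
    (hurep : ∀ p q : O → ℝ, IsLottery p → IsLottery q →
      (lexGE2 (u p) (u q) ↔ pref p q))
    (hvrep : ∀ p q : O → ℝ, IsLottery p → IsLottery q →
      (lexGE2 (v p) (v q) ↔ pref p q))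
    -- Completeness, Transitivity, Independence on Δ(O)
    (hcomplete : ∀ p q : O → ℝ, IsLottery p → IsLottery q → pref p q ∨ pref q p)
    (htrans : ∀ p q r : O → ℝ, IsLottery p → IsLottery q → IsLottery r →
      pref p q → pref q r → pref p r)
    (hindep : ∀ p q r : O → ℝ, IsLottery p → IsLottery q → IsLottery r →
      ∀ α : ℝ, 0 ≤ α → α < 1 →
        (pref (α • p + (1 - α) • q) (α • p + (1 - α) • r) ↔ pref q r))
    -- Continuity on safe lotteries
    (hcont : ∀ p q r : O → ℝ, SafeLottery pref odag p → SafeLottery pref odag q →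
      SafeLottery pref odag r → pref p q → pref q r →
      ∃ α : ℝ, 0 ≤ α ∧ α ≤ 1 ∧ Indiff pref (α • p + (1 - α) • r) q)
    -- Safety First
    (hsafety : ∀ p q : O → ℝ, SafeLottery pref odag p → SafeLottery pref odag q →
      ∀ ε : ℝ, 0 < ε → ε ≤ 1 → ¬ pref (ε • dirac odag + (1 - ε) • p) q)
    -- Non-triviality: a strict preference between two safe outcomes
    (hnontriv : ∃ o₁ o₂ : O, SafeOutcome pref odag o₁ ∧ SafeOutcome pref odag o₂ ∧
      ¬ Indiff pref (dirac o₁) (dirac o₂)) :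
    ∃ A ∈ LTpos2, ∃ b : Fin 2 → ℝ,
      ∀ p : O → ℝ, IsLottery p → v p = A.mulVec (u p) + b :=
  stmt_8_general odag pref u v hulin hvlin hurep hvrep hsafety hnontriv
end

section
/- In a finite lexicographic MDP (rewards in R^d, transition-dependent multipliers Γ(e) in LT+(d) with all diagonal entries strictly less than 1), there exists a stationary deterministic policy π such that Q^π(s,a) ≥_lex Q^{π'}(s,a) for every policy π' and every state-action pair (s,a). -/
/-!
Every multiplier `Γ ∈ LT⁺(d) ∪ {0}` is monotone for the lexicographic order, since the first
nonzero coordinate of `Γ v` is the first nonzero coordinate of `v` scaled by a positive diagonal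
entry. This gives a maximum principle: if `x s ≥ ∑ p G x` at every state, look at a lex-minimal
value `m = x t`; then `(1 - ∑ p G) m ≥ 0`, and `1 - ∑ p G` is again in `LT⁺(d)` because the
diagonal entries are `< 1`, so `m ≥ 0`.

Among the finitely many stationary deterministic policies take one, `π`, whose value vector
`s ↦ Q π s (π s)` is maximal. If `π` were not greedy with respect to its own `Q`, switching one
action would, by the maximum principle, weakly improve every value, hence not change them, hence
not change `Q π` either — a contradiction. For greedy `π` and any `π'`, the maximum principle
gives `Q π' s (π' s) ≤ Q π s (π s)`, and the Bellman equation transfers this to `Q`.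
-/

/-- Strict lexicographic order on `ℝ^d`. -/
def lexGT {d : ℕ} (u v : Fin d → ℝ) : Prop :=
  ∃ k : Fin d, (∀ i : Fin d, i < k → u i = v i) ∧ v k < u k

/-- Weak lexicographic order on `ℝ^d`. -/
def lexGE {d : ℕ} (u v : Fin d → ℝ) : Prop := u = v ∨ lexGT u v

/-- `LT⁺(d)`: lower triangular matrices with strictly positive diagonal. -/
def LTpos (d : ℕ) : Set (Matrix (Fin d) (Fin d) ℝ) :=
  {A | (∀ i j : Fin d, i < j → A i j = 0) ∧ ∀ i : Fin d, 0 < A i i}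

open Matrix

theorem lexGE_iff_toLex_le {d : ℕ} {u v : Fin d → ℝ} : lexGE u v ↔ toLex v ≤ toLex u := by
  have hlt : lexGT u v ↔ toLex v < toLex u := by
    constructor <;> rintro ⟨k, hk, hlt⟩ <;> exact ⟨k, fun j hj => (hk j hj).symm, hlt⟩
  rw [lexGE, hlt, le_iff_lt_or_eq, toLex_inj, eq_comm, or_comm]
  rfl

theorem Finset.sum_mul_lt_one {ι : Type*} [Fintype ι] {p g : ι → ℝ} (hp : ∀ i, 0 ≤ p i)
    (hp1 : ∑ i, p i ≤ 1) (hg : ∀ i, g i < 1) : ∑ i, p i * g i < 1 := by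
  by_cases h : ∀ i, p i = 0
  · simp [h]
  push Not at h
  obtain ⟨i, hi⟩ := h
  calc ∑ i, p i * g i < ∑ i, p i :=
        Finset.sum_lt_sum (fun j _ => mul_le_of_le_one_right (hp j) (hg j).le)
          ⟨i, Finset.mem_univ i, mul_lt_of_lt_one_right ((hp i).lt_of_ne' hi) (hg i)⟩
    _ ≤ 1 := hp1

section LowerTriangular

variable {d : ℕ} {G : Matrix (Fin d) (Fin d) ℝ} {w : Fin d → ℝ}

theorem zero_lt_toLex_iff : 0 < toLex w ↔ ∃ k, (∀ j < k, w j = 0) ∧ 0 < w k := by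
  constructor <;> rintro ⟨k, hk, hwk⟩ <;> exact ⟨k, fun j hj => (hk j hj).symm, hwk⟩

theorem mulVec_apply_eq_diag_mul (hG : ∀ i j, i < j → G i j = 0) {i : Fin d}
    (hw : ∀ j < i, w j = 0) : (G *ᵥ w) i = G i i * w i := by
  refine Finset.sum_eq_single i (fun j _ hji => ?_) (absurd (Finset.mem_univ i))
  rcases lt_or_gt_of_ne hji with h | h
  · rw [hw j h, mul_zero]
  · exact mul_eq_zero_of_left (hG i j h) _

theorem lowerTriangular_of_mem_LTpos_or_eq_zero (hG : G ∈ LTpos d ∨ G = 0) :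
    ∀ i j, i < j → G i j = 0 := by
  rcases hG with hG | rfl
  exacts [hG.1, fun _ _ _ => rfl]

theorem toLex_mulVec_pos_of_mem_LTpos (hG : G ∈ LTpos d) (hw : 0 < toLex w) :
    0 < toLex (G *ᵥ w) := by
  obtain ⟨k, hvanish, hwk⟩ := zero_lt_toLex_iff.mp hw
  refine zero_lt_toLex_iff.mpr ⟨k, fun i hi => ?_, ?_⟩
  · rw [mulVec_apply_eq_diag_mul hG.1 fun j hj => hvanish j (hj.trans hi), hvanish i hi,
      mul_zero]
  · rw [mulVec_apply_eq_diag_mul hG.1 hvanish]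
    exact mul_pos (hG.2 k) hwk

theorem toLex_mulVec_nonneg (hG : G ∈ LTpos d ∨ G = 0) (hw : 0 ≤ toLex w) :
    0 ≤ toLex (G *ᵥ w) := by
  rcases hG with hG | rfl
  · rcases hw.eq_or_lt with hw | hw
    · rw [show w = 0 from toLex.injective hw.symm, mulVec_zero]
      rfl
    · exact (toLex_mulVec_pos_of_mem_LTpos hG hw).le
  · rw [zero_mulVec]
    rfl

theorem toLex_nonneg_of_toLex_mulVec_nonneg (hG : G ∈ LTpos d) (h : 0 ≤ toLex (G *ᵥ w)) :
    0 ≤ toLex w := by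
  by_contra! hw
  have hw' : 0 < toLex (-w) := neg_pos.mpr hw
  have hneg := toLex_mulVec_pos_of_mem_LTpos hG hw'
  rw [mulVec_neg] at hneg
  exact (neg_pos.mp hneg).not_ge h

theorem toLex_smul_nonneg {p : ℝ} (hp : 0 ≤ p) (hw : 0 ≤ toLex w) : 0 ≤ toLex (p • w) := by
  rcases hp.eq_or_lt with rfl | hp
  · rw [zero_smul]
    rfl
  rcases hw.eq_or_lt with hw | hw
  · rw [show w = 0 from toLex.injective hw.symm, smul_zero]
    rfl
  obtain ⟨k, hvanish, hwk⟩ := zero_lt_toLex_iff.mp hw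
  refine (zero_lt_toLex_iff.mpr ⟨k, fun i hi => ?_, ?_⟩).le
  · simp [hvanish i hi]
  · exact mul_pos hp hwk

end LowerTriangular

section MaximumPrinciple

variable {S : Type*} [Fintype S] {d : ℕ}

theorem toLex_sum_smul_mulVec_nonneg {p : S → ℝ} {G : S → Matrix (Fin d) (Fin d) ℝ}
    (hp : ∀ s, 0 ≤ p s) (hG : ∀ s, G s ∈ LTpos d ∨ G s = 0) {w : S → Fin d → ℝ}
    (hw : ∀ s, 0 ≤ toLex (w s)) : 0 ≤ toLex (∑ s, p s • G s *ᵥ w s) :=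
  Finset.sum_nonneg fun s _ => toLex_smul_nonneg (hp s) (toLex_mulVec_nonneg (hG s) (hw s))

theorem one_sub_sum_smul_mem_LTpos {p : S → ℝ} {G : S → Matrix (Fin d) (Fin d) ℝ}
    (hp : ∀ s, 0 ≤ p s) (hp1 : ∑ s, p s ≤ 1) (hG : ∀ s, G s ∈ LTpos d ∨ G s = 0)
    (hGd : ∀ s i, G s i i < 1) : 1 - ∑ s, p s • G s ∈ LTpos d := by
  refine ⟨fun i j hij => ?_, fun i => ?_⟩
  · simp [Matrix.sum_apply, one_apply_ne hij.ne,
      lowerTriangular_of_mem_LTpos_or_eq_zero (hG _) i j hij]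
  · simp only [Matrix.sub_apply, one_apply_eq, Matrix.sum_apply, Matrix.smul_apply, smul_eq_mul,
      sub_pos]
    exact Finset.sum_mul_lt_one hp hp1 fun s => hGd s i

theorem toLex_nonneg_of_sum_smul_mulVec_le {p : S → S → ℝ}
    {G : S → S → Matrix (Fin d) (Fin d) ℝ} (hp : ∀ s s', 0 ≤ p s s')
    (hp1 : ∀ s, ∑ s', p s s' ≤ 1) (hG : ∀ s s', G s s' ∈ LTpos d ∨ G s s' = 0)
    (hGd : ∀ s s' i, G s s' i i < 1) {x : S → Fin d → ℝ}
    (hx : ∀ s, toLex (∑ s', p s s' • G s s' *ᵥ x s') ≤ toLex (x s)) (s : S) :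
    0 ≤ toLex (x s) := by
  obtain ⟨t, -, ht⟩ := Finset.univ.exists_min_image (fun s => toLex (x s)) ⟨s, Finset.mem_univ s⟩
  have hmin : 0 ≤ toLex ((1 - ∑ s', p t s' • G t s') *ᵥ x t) := by
    have hsplit : (1 - ∑ s', p t s' • G t s') *ᵥ x t =
        (x t - ∑ s', p t s' • G t s' *ᵥ x s') + ∑ s', p t s' • G t s' *ᵥ (x s' - x t) := by
      simp only [sub_mulVec, one_mulVec, sum_mulVec, smul_mulVec, mulVec_sub, smul_sub,
        Finset.sum_sub_distrib]
      abel
    rw [hsplit]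
    exact add_nonneg (sub_nonneg.mpr (hx t)) (toLex_sum_smul_mulVec_nonneg (hp t) (hG t)
      fun s' => sub_nonneg.mpr (ht s' (Finset.mem_univ s')))
  exact (toLex_nonneg_of_toLex_mulVec_nonneg
    (one_sub_sum_smul_mem_LTpos (hp t) (hp1 t) (hG t) (hGd t)) hmin).trans
    (ht s (Finset.mem_univ s))

end MaximumPrinciple

section MDP

variable {S A : Type*} [Fintype S] {d : ℕ}

def IsBellmanQ (P : S → A → S → ℝ) (r : S → A → S → Fin d → ℝ)
    (Γ : S → A → S → Matrix (Fin d) (Fin d) ℝ) (Q : (S → A) → S → A → Fin d → ℝ) : Prop :=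
  ∀ π s a, Q π s a = ∑ s', P s a s' • (r s a s' + Γ s a s' *ᵥ Q π s' (π s'))

variable {P : S → A → S → ℝ} {r : S → A → S → Fin d → ℝ}
  {Γ : S → A → S → Matrix (Fin d) (Fin d) ℝ} {Q : (S → A) → S → A → Fin d → ℝ}

theorem IsBellmanQ.sub_eq (hQ : IsBellmanQ P r Γ Q) (π₁ π₂ : S → A) (s : S) (a : A) :
    Q π₁ s a - Q π₂ s a =
      ∑ s', P s a s' • Γ s a s' *ᵥ (Q π₁ s' (π₁ s') - Q π₂ s' (π₂ s')) := by
  rw [hQ π₁, hQ π₂, ← Finset.sum_sub_distrib]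
  refine Finset.sum_congr rfl fun s' _ => ?_
  rw [← smul_sub, mulVec_sub, add_sub_add_left_eq_sub]

theorem IsBellmanQ.eq_of_value_eq (hQ : IsBellmanQ P r Γ Q) {π₁ π₂ : S → A}
    (h : ∀ s, Q π₁ s (π₁ s) = Q π₂ s (π₂ s)) : Q π₁ = Q π₂ := by
  funext s a
  rw [hQ π₁, hQ π₂]
  simp only [h]

theorem IsBellmanQ.toLex_le (hQ : IsBellmanQ P r Γ Q) (hP : ∀ s a s', 0 ≤ P s a s')
    (hΓ : ∀ s a s', Γ s a s' ∈ LTpos d ∨ Γ s a s' = 0) {π₁ π₂ : S → A}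
    (h : ∀ s, toLex (Q π₁ s (π₁ s)) ≤ toLex (Q π₂ s (π₂ s))) (s : S) (a : A) :
    toLex (Q π₁ s a) ≤ toLex (Q π₂ s a) := by
  rw [← sub_nonneg]
  change 0 ≤ toLex (Q π₂ s a - Q π₁ s a)
  rw [hQ.sub_eq]
  exact toLex_sum_smul_mulVec_nonneg (hP s a) (hΓ s a) fun s' => sub_nonneg.mpr (h s')

theorem IsBellmanQ.value_le_of_value_le_Q (hQ : IsBellmanQ P r Γ Q)
    (hP : ∀ s a s', 0 ≤ P s a s') (hP1 : ∀ s a, ∑ s', P s a s' ≤ 1)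
    (hΓ : ∀ s a s', Γ s a s' ∈ LTpos d ∨ Γ s a s' = 0) (hΓd : ∀ s a s' i, Γ s a s' i i < 1)
    {π₁ π₂ : S → A}
    (h : ∀ s, toLex (Q π₁ s (π₁ s)) ≤ toLex (Q π₁ s (π₂ s))) (s : S) :
    toLex (Q π₁ s (π₁ s)) ≤ toLex (Q π₂ s (π₂ s)) := by
  rw [← sub_nonneg]
  refine toLex_nonneg_of_sum_smul_mulVec_le (fun t => hP t (π₂ t)) (fun t => hP1 t (π₂ t))
    (fun t => hΓ t (π₂ t)) (fun t => hΓd t (π₂ t))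
    (x := fun t => Q π₂ t (π₂ t) - Q π₁ t (π₁ t)) (fun t => ?_) s
  rw [← hQ.sub_eq]
  exact sub_le_sub_left (h t) _

theorem IsBellmanQ.value_le_of_Q_le_value (hQ : IsBellmanQ P r Γ Q)
    (hP : ∀ s a s', 0 ≤ P s a s') (hP1 : ∀ s a, ∑ s', P s a s' ≤ 1)
    (hΓ : ∀ s a s', Γ s a s' ∈ LTpos d ∨ Γ s a s' = 0) (hΓd : ∀ s a s' i, Γ s a s' i i < 1)
    {π₁ π₂ : S → A}
    (h : ∀ s, toLex (Q π₁ s (π₂ s)) ≤ toLex (Q π₁ s (π₁ s))) (s : S) :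
    toLex (Q π₂ s (π₂ s)) ≤ toLex (Q π₁ s (π₁ s)) := by
  rw [← sub_nonneg]
  refine toLex_nonneg_of_sum_smul_mulVec_le (fun t => hP t (π₂ t)) (fun t => hP1 t (π₂ t))
    (fun t => hΓ t (π₂ t)) (fun t => hΓd t (π₂ t))
    (x := fun t => Q π₁ t (π₁ t) - Q π₂ t (π₂ t)) (fun t => ?_) s
  rw [← hQ.sub_eq]
  exact sub_le_sub_right (h t) _

theorem IsBellmanQ.exists_greedy [Finite A] [Nonempty A] (hQ : IsBellmanQ P r Γ Q)
    (hP : ∀ s a s', 0 ≤ P s a s') (hP1 : ∀ s a, ∑ s', P s a s' ≤ 1)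
    (hΓ : ∀ s a s', Γ s a s' ∈ LTpos d ∨ Γ s a s' = 0) (hΓd : ∀ s a s' i, Γ s a s' i i < 1) :
    ∃ π : S → A, ∀ s a, toLex (Q π s a) ≤ toLex (Q π s (π s)) := by
  classical
  obtain ⟨π, -, hmax⟩ := Set.finite_univ.exists_maximalFor
    (fun π s => toLex (Q π s (π s))) Set.univ ⟨Classical.arbitrary _, trivial⟩
  refine ⟨π, fun s a => le_of_not_gt fun hlt => ?_⟩
  set π' := Function.update π s a
  have himp : ∀ t, toLex (Q π t (π t)) ≤ toLex (Q π t (π' t)) := by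
    intro t
    rcases eq_or_ne t s with rfl | ht
    · simpa [π'] using hlt.le
    · simp [π', ht]
  have hV := hQ.value_le_of_value_le_Q hP hP1 hΓ hΓd himp
  have hV' : ∀ t, Q π' t (π' t) = Q π t (π t) :=
    fun t => toLex.injective ((hV t).antisymm' (hmax trivial hV t))
  have hsame : Q π s a = Q π s (π s) := by
    simpa [π', hQ.eq_of_value_eq hV'] using hV' s
  exact hlt.ne' hsame

end MDP

theorem stmt_14_general {S A : Type*} [Fintype S] [Fintype A] [Nonempty A]
    (d : ℕ)
    (P : S → A → S → ℝ)
    (hP : ∀ s a, (∀ s', 0 ≤ P s a s') ∧ ∑ s', P s a s' = 1)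
    -- each transition (s, a, s') emits an event with vector reward `r s a s'`
    -- and multiplier matrix `Γ s a s'`
    (r : S → A → S → Fin d → ℝ)
    (Γ : S → A → S → Matrix (Fin d) (Fin d) ℝ)
    (hΓ : ∀ s a s', Γ s a s' ∈ LTpos d ∨ Γ s a s' = 0)
    (hΓdiag : ∀ s a s' i, Γ s a s' i i < 1)
    -- `Q π` is the expected lexicographic return of policy `π`, characterized
    -- by the Bellman recursion
    (Q : (S → A) → S → A → Fin d → ℝ)
    (hQ : ∀ (π : S → A) (s : S) (a : A),
      Q π s a = ∑ s', P s a s' • (r s a s' + (Γ s a s').mulVec (Q π s' (π s')))) :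
    ∃ π : S → A, ∀ (π' : S → A) (s : S) (a : A),
      lexGE (Q π s a) (Q π' s a) := by
  have hQ' : IsBellmanQ P r Γ Q := hQ
  have hP0 : ∀ s a s', 0 ≤ P s a s' := fun s a => (hP s a).1
  have hP1 : ∀ s a, ∑ s', P s a s' ≤ 1 := fun s a => (hP s a).2.le
  obtain ⟨π, hgreedy⟩ := hQ'.exists_greedy hP0 hP1 hΓ hΓdiag
  refine ⟨π, fun π' s a => lexGE_iff_toLex_le.mpr (hQ'.toLex_le hP0 hΓ (fun t => ?_) s a)⟩
  exact hQ'.value_le_of_Q_le_value hP0 hP1 hΓ hΓdiag (fun t => hgreedy t (π' t)) t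

/-- In a finite lexicographic MDP (vector rewards, transition-dependent
multipliers in `LT⁺(d) ∪ {0}` with diagonal entries `< 1`), there is a
stationary deterministic policy whose `Q`-function lexicographically dominates
that of every policy at every state-action pair. -/
theorem stmt_14 {S A : Type*} [Fintype S] [Fintype A] [Nonempty S] [Nonempty A]
    (d : ℕ)
    (P : S → A → S → ℝ)
    (hP : ∀ s a, (∀ s', 0 ≤ P s a s') ∧ ∑ s', P s a s' = 1)
    -- each transition (s, a, s') emits an event with vector reward `r s a s'`
    -- and multiplier matrix `Γ s a s'`
    (r : S → A → S → Fin d → ℝ)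
    (Γ : S → A → S → Matrix (Fin d) (Fin d) ℝ)
    (hΓ : ∀ s a s', Γ s a s' ∈ LTpos d ∨ Γ s a s' = 0)
    (hΓdiag : ∀ s a s' i, Γ s a s' i i < 1)
    -- `Q π` is the expected lexicographic return of policy `π`, characterized
    -- by the Bellman recursion
    (Q : (S → A) → S → A → Fin d → ℝ)
    (hQ : ∀ (π : S → A) (s : S) (a : A),
      Q π s a = ∑ s', P s a s' • (r s a s' + (Γ s a s').mulVec (Q π s' (π s')))) :
    ∃ π : S → A, ∀ (π' : S → A) (s : S) (a : A),
      lexGE (Q π s a) (Q π' s a) :=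
  stmt_14_general d P hP r Γ hΓ hΓdiag Q hQ
end

section
/- For any bounded sequence of vector rewards r_t in R^d and multiplier matrices Γ_t in LT+(d) with diagonal entries uniformly bounded above by some γ̄ < 1 and all entries uniformly bounded, the infinite lexicographic return defined as the limit of partial sums u_T = r_0 + Γ_0(r_1 + Γ_1(r_2 + ...)) (i.e., u_T = Σ_{t=0}^{T} (Γ_0 Γ_1 ⋯ Γ_{t−1}) r_t) converges in R^d as T → ∞. -/
open Finset Matrix

section GeomWeight

variable {d : ℕ} {ε : ℝ}

def geomWeight (ε : ℝ) (v : Fin d → ℝ) : Fin d → ℝ := fun i => ε ^ (i : ℕ) * v i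

lemma abs_geomWeight_apply (hε0 : 0 ≤ ε) (v : Fin d → ℝ) (i : Fin d) :
    |geomWeight ε v i| = ε ^ (i : ℕ) * |v i| := by
  rw [geomWeight, abs_mul, abs_of_nonneg (pow_nonneg hε0 _)]

lemma pow_mul_abs_le_norm_geomWeight (hε0 : 0 ≤ ε) (v : Fin d → ℝ) (i : Fin d) :
    ε ^ (i : ℕ) * |v i| ≤ ‖geomWeight ε v‖ :=
  abs_geomWeight_apply hε0 v i ▸ norm_le_pi_norm (geomWeight ε v) i

lemma norm_geomWeight_le (hε0 : 0 ≤ ε) (hε1 : ε ≤ 1) (v : Fin d → ℝ) :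
    ‖geomWeight ε v‖ ≤ ‖v‖ := by
  refine (pi_norm_le_iff_of_nonneg (norm_nonneg v)).mpr fun i => ?_
  rw [Real.norm_eq_abs, abs_geomWeight_apply hε0]
  exact (mul_le_of_le_one_left (abs_nonneg _) (pow_le_one₀ hε0 hε1)).trans (norm_le_pi_norm v i)

lemma pow_mul_norm_le_norm_geomWeight (hε0 : 0 ≤ ε) (hε1 : ε ≤ 1) (v : Fin d → ℝ) :
    ε ^ d * ‖v‖ ≤ ‖geomWeight ε v‖ := by
  have hεd : 0 ≤ ε ^ d := pow_nonneg hε0 d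
  rw [← abs_of_nonneg hεd, ← Real.norm_eq_abs, ← norm_smul]
  refine (pi_norm_le_iff_of_nonneg (norm_nonneg _)).mpr fun i => ?_
  rw [Pi.smul_apply, norm_smul, Real.norm_eq_abs, abs_of_nonneg hεd, Real.norm_eq_abs]
  exact (mul_le_mul_of_nonneg_right (pow_le_pow_of_le_one hε0 hε1 i.is_lt.le) (abs_nonneg _)).trans
    (pow_mul_abs_le_norm_geomWeight hε0 v i)

variable {A : Matrix (Fin d) (Fin d) ℝ} {γ M : ℝ}

lemma pow_mul_abs_mul_le_of_lower_triangular (hε0 : 0 ≤ ε) (hε1 : ε ≤ 1)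
    (hlower : ∀ i j, i < j → A i j = 0) (hdiag : ∀ i, |A i i| ≤ γ) (hM : ∀ i j, |A i j| ≤ M)
    (v : Fin d → ℝ) (i j : Fin d) :
    ε ^ (i : ℕ) * |A i j * v j| ≤ ((if j = i then γ else 0) + ε * M) * ‖geomWeight ε v‖ := by
  have hW := pow_mul_abs_le_norm_geomWeight hε0 v j
  have hM0 : 0 ≤ M := (abs_nonneg _).trans (hM i j)
  have hεMW : 0 ≤ ε * M * ‖geomWeight ε v‖ := by positivity
  rcases lt_trichotomy j i with hji | rfl | hij
  · rw [if_neg hji.ne, zero_add]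
    have hpow : ε ^ ((i : ℕ) - j) ≤ ε := pow_le_of_le_one hε0 hε1 (by omega)
    calc ε ^ (i : ℕ) * |A i j * v j| = ε ^ ((i : ℕ) - j) * |A i j| * (ε ^ (j : ℕ) * |v j|) := by
          rw [abs_mul, ← pow_sub_mul_pow ε (show (j : ℕ) ≤ i by omega)]; ring
      _ ≤ ε * M * ‖geomWeight ε v‖ := by gcongr; exact hM i j
  · rw [if_pos rfl, add_mul, abs_mul, mul_left_comm]
    exact le_add_of_le_of_nonneg (mul_le_mul (hdiag j) hW (by positivity)
      ((abs_nonneg _).trans (hdiag j))) hεMW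
  · rw [hlower i j hij, zero_mul, abs_zero, mul_zero, if_neg hij.ne', zero_add]
    exact hεMW

lemma norm_geomWeight_mulVec_le_of_lower_triangular (hε0 : 0 ≤ ε) (hε1 : ε ≤ 1) (hγ : 0 ≤ γ)
    (hlower : ∀ i j, i < j → A i j = 0) (hdiag : ∀ i, |A i i| ≤ γ) (hM : ∀ i j, |A i j| ≤ M)
    (v : Fin d → ℝ) :
    ‖geomWeight ε (A *ᵥ v)‖ ≤ (γ + ε * M * d) * ‖geomWeight ε v‖ := by
  have hεMd : 0 ≤ ε * M * d := by
    cases d with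
    | zero => simp
    | succ n => have := (abs_nonneg _).trans (hM 0 0); positivity
  refine (pi_norm_le_iff_of_nonneg (by positivity)).mpr fun i => ?_
  rw [Real.norm_eq_abs, abs_geomWeight_apply hε0]
  calc ε ^ (i : ℕ) * |(A *ᵥ v) i| ≤ ∑ j, ε ^ (i : ℕ) * |A i j * v j| := by
        rw [← mul_sum]
        gcongr
        exact abs_sum_le_sum_abs (fun j => A i j * v j) univ
    _ ≤ ∑ j, ((if j = i then γ else 0) + ε * M) * ‖geomWeight ε v‖ :=
        sum_le_sum fun j _ => pow_mul_abs_mul_le_of_lower_triangular hε0 hε1 hlower hdiag hM v i j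
    _ = (γ + ε * M * d) * ‖geomWeight ε v‖ := by
        rw [← sum_mul, sum_add_distrib, sum_ite_eq', if_pos (mem_univ i), sum_const, card_univ,
          Fintype.card_fin, nsmul_eq_mul]
        ring

lemma norm_geomWeight_prod_mulVec_le {c : ℝ} (hc : 0 ≤ c) (l : List (Matrix (Fin d) (Fin d) ℝ))
    (hl : ∀ A ∈ l, ∀ v, ‖geomWeight ε (A *ᵥ v)‖ ≤ c * ‖geomWeight ε v‖) (v : Fin d → ℝ) :
    ‖geomWeight ε (l.prod *ᵥ v)‖ ≤ c ^ l.length * ‖geomWeight ε v‖ := by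
  induction l with
  | nil => simp
  | cons A l ih =>
    rw [List.prod_cons, ← mulVec_mulVec, List.length_cons, pow_succ', mul_assoc]
    exact (hl A List.mem_cons_self _).trans <| mul_le_mul_of_nonneg_left
      (ih fun B hB => hl B (List.mem_cons_of_mem A hB)) hc

lemma norm_prod_mulVec_le {c : ℝ} (hε0 : 0 < ε) (hε1 : ε ≤ 1) (hc : 0 ≤ c)
    (l : List (Matrix (Fin d) (Fin d) ℝ))
    (hl : ∀ A ∈ l, ∀ v, ‖geomWeight ε (A *ᵥ v)‖ ≤ c * ‖geomWeight ε v‖) (v : Fin d → ℝ) :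
    ‖l.prod *ᵥ v‖ ≤ c ^ l.length * ‖v‖ / ε ^ d := by
  rw [le_div_iff₀ (by positivity), mul_comm]
  calc ε ^ d * ‖l.prod *ᵥ v‖ ≤ ‖geomWeight ε (l.prod *ᵥ v)‖ :=
        pow_mul_norm_le_norm_geomWeight hε0.le hε1 _
    _ ≤ c ^ l.length * ‖geomWeight ε v‖ := norm_geomWeight_prod_mulVec_le hc l hl v
    _ ≤ c ^ l.length * ‖v‖ := by gcongr; exact norm_geomWeight_le hε0.le hε1 v

end GeomWeight

lemma exists_pos_le_one_mul_lt {a b : ℝ} (ha : 0 < a) (hb : 0 ≤ b) :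
    ∃ ε : ℝ, 0 < ε ∧ ε ≤ 1 ∧ ε * b < a := by
  refine ⟨min 1 (a / (b + 1)), lt_min one_pos (by positivity), min_le_left _ _, ?_⟩
  calc min 1 (a / (b + 1)) * b ≤ a / (b + 1) * b := by gcongr; exact min_le_right _ _
    _ < a := by
      rw [div_mul_eq_mul_div, div_lt_iff₀ (by positivity)]
      nlinarith

/-- The infinite lexicographic return converges: the partial sums
`u_T = Σ_{t=0}^{T} (Γ_0 Γ_1 ⋯ Γ_{t-1}) r_t` converge in `ℝ^d` as `T → ∞`. -/
theorem stmt_16 {d : ℕ}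
    (Γ : ℕ → Matrix (Fin d) (Fin d) ℝ) (r : ℕ → Fin d → ℝ)
    (M γbar : ℝ) (hγbar : γbar < 1)
    (hΓ : ∀ t, Γ t ∈ LTpos d)
    (hdiag : ∀ t i, Γ t i i ≤ γbar)
    (hbound : ∀ t i j, |Γ t i j| ≤ M)
    (hr : ∀ t, ‖r t‖ ≤ M) :
    ∃ L : Fin d → ℝ,
      Filter.Tendsto
        (fun T : ℕ => ∑ t ∈ Finset.range (T + 1),
          (((List.range t).map Γ).prod).mulVec (r t))
        Filter.atTop (nhds L) := by
  have hM : 0 ≤ M := (norm_nonneg _).trans (hr 0)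
  set γ := max γbar 0
  obtain ⟨ε, hε0, hε1, hεγ⟩ :=
    exists_pos_le_one_mul_lt (sub_pos.2 (max_lt hγbar one_pos)) (by positivity : 0 ≤ M * d)
  set c := γ + ε * M * d
  have hc0 : 0 ≤ c := by positivity
  have hc1 : c < 1 := by linarith [mul_assoc ε M d]
  have hcontract : ∀ t, ∀ A ∈ (List.range t).map Γ, ∀ v,
      ‖geomWeight ε (A *ᵥ v)‖ ≤ c * ‖geomWeight ε v‖ := by
    simp only [List.mem_map, List.mem_range]
    rintro t _ ⟨s, -, rfl⟩ v
    refine norm_geomWeight_mulVec_le_of_lower_triangular hε0.le hε1 (le_max_right _ _)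
      (hΓ s).1 (fun i => ?_) (hbound s) v
    exact (abs_of_pos ((hΓ s).2 i)).trans_le ((hdiag s i).trans (le_max_left _ _))
  have hterm : ∀ t, ‖((List.range t).map Γ).prod *ᵥ r t‖ ≤ c ^ t * (M / ε ^ d) := fun t => by
    have h := norm_prod_mulVec_le hε0 hε1 hc0 _ (hcontract t) (r t)
    rw [List.length_map, List.length_range] at h
    rw [← mul_div_assoc]
    exact h.trans (by gcongr; exact hr t)
  obtain ⟨L, hL⟩ := Summable.of_norm_bounded
    ((summable_geometric_of_lt_one hc0 hc1).mul_right (M / ε ^ d)) hterm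
  exact ⟨L, hL.tendsto_sum_nat.comp (Filter.tendsto_add_atTop_nat 1)⟩
end
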